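/- For every integer n ≥ 1, in the ring R_n one has ∏_{i=1}^{n} (x_i + ε)^{2^{i−1}} = ε^{2^n − 1 − n} · ∏_{i=1}^{n} (x_i + ε). -/

import Mathlib

open MvPolynomial

/-- The ideal `I_m ⊆ 𝔽₂[x₁,…,x_m,ε]` generated by `x_j² − ε·x_j` for `j = 1,…,m`.
The variables are indexed by `Fin (m+1)`: index `0` is `ε` and index `j ≠ 0` is `x_j`. -/
noncomputable def relIdeal (m : ℕ) : Ideal (MvPolynomial (Fin (m + 1)) (ZMod 2)) :=
  Ideal.span {f : MvPolynomial (Fin (m + 1)) (ZMod 2) |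
    ∃ j : Fin (m + 1), j ≠ 0 ∧ f = X j ^ 2 - X 0 * X j}

/-- The ring `R_m = 𝔽₂[x₁,…,x_m,ε]/I_m`. -/
abbrev Rring (m : ℕ) := MvPolynomial (Fin (m + 1)) (ZMod 2) ⧸ relIdeal m

open Fin.NatCast in
/-- The image of the variable `x_j` (for `1 ≤ j ≤ m`) in `R_m`. -/
noncomputable def xv (m : ℕ) (j : ℕ) : Rring m :=
  Ideal.Quotient.mk (relIdeal m) (X (j : Fin (m + 1)))

/-- The image of the variable `ε` in `R_m`. -/
noncomputable def eps (m : ℕ) : Rring m :=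
  Ideal.Quotient.mk (relIdeal m) (X 0)

/-!
Each `y = xᵢ + ε` satisfies `y² = ε·y`: indeed `(xᵢ + ε)² = xᵢ² + ε² = ε·xᵢ + ε²` in characteristic
two. Iterating, `y^(2^k) = ε^(2^k - 1)·y`, so the left-hand side is `ε^s · ∏ (xᵢ + ε)` with
`s = ∑_{i=1}^{n} (2^(i-1) - 1) = 2^n - 1 - n`.
-/

theorem add_sq_eq_mul_add_of_sq_eq_mul {R : Type*} [CommRing R] (h2 : (2 : R) = 0) {x e : R}
    (hx : x ^ 2 = e * x) : (x + e) ^ 2 = e * (x + e) := by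
  linear_combination hx + x * e * h2

theorem pow_two_pow_eq_pow_mul_of_sq_eq_mul {M : Type*} [CommMonoid M] {y e : M}
    (hy : y ^ 2 = e * y) (k : ℕ) : y ^ 2 ^ k = e ^ (2 ^ k - 1) * y := by
  induction k with
  | zero => simp
  | succ k ih =>
    have hexp : 2 * (2 ^ k - 1) + 1 = 2 ^ (k + 1) - 1 := by
      have := Nat.one_le_two_pow (n := k)
      rw [pow_succ]; omega
    calc y ^ 2 ^ (k + 1) = (e ^ (2 ^ k - 1) * y) ^ 2 := by rw [pow_succ, pow_mul, ih]
      _ = e ^ (2 * (2 ^ k - 1)) * (e * y) := by rw [mul_pow, ← pow_mul', hy]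
      _ = e ^ (2 ^ (k + 1) - 1) * y := by rw [← hexp, pow_succ, mul_assoc]

theorem sum_Icc_two_pow_pred_sub_one (n : ℕ) :
    ∑ i ∈ Finset.Icc 1 n, (2 ^ (i - 1) - 1) = 2 ^ n - 1 - n := by
  induction n with
  | zero => simp
  | succ n ih =>
    have hn : n < 2 ^ n := Nat.lt_two_pow_self
    rw [Finset.sum_Icc_succ_top (by omega), ih, Nat.add_sub_cancel, pow_succ]
    omega

theorem Rring.two_eq_zero (m : ℕ) : (2 : Rring m) = 0 := by
  rw [← map_ofNat (algebraMap (ZMod 2) (Rring m)) 2, show (OfNat.ofNat 2 : ZMod 2) = 0 from rfl,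
    map_zero]

open Fin.NatCast in
theorem xv_sq (m j : ℕ) (hj₁ : 1 ≤ j) (hj₂ : j ≤ m) : xv m j ^ 2 = eps m * xv m j := by
  have hj : (j : Fin (m + 1)) ≠ 0 := by
    rw [Ne, Fin.ext_iff, Fin.val_natCast, Nat.mod_eq_of_lt (by omega), Fin.val_zero]
    omega
  have hmem : X (j : Fin (m + 1)) ^ 2 - X 0 * X (j : Fin (m + 1)) ∈ relIdeal m :=
    Ideal.subset_span ⟨j, hj, rfl⟩
  rw [← sub_eq_zero]
  simpa only [xv, eps, map_sub, map_mul, map_pow] using Ideal.Quotient.eq_zero_iff_mem.mpr hmem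

theorem stmt11_general (n : ℕ) :
    ∏ i ∈ Finset.Icc 1 n, (xv n i + eps n) ^ (2 ^ (i - 1))
      = eps n ^ (2 ^ n - 1 - n) * ∏ i ∈ Finset.Icc 1 n, (xv n i + eps n) := by
  have hpow : ∀ i ∈ Finset.Icc 1 n,
      (xv n i + eps n) ^ 2 ^ (i - 1) = eps n ^ (2 ^ (i - 1) - 1) * (xv n i + eps n) := by
    intro i hi
    obtain ⟨hi₁, hi₂⟩ := Finset.mem_Icc.mp hi
    exact pow_two_pow_eq_pow_mul_of_sq_eq_mul
      (add_sq_eq_mul_add_of_sq_eq_mul (Rring.two_eq_zero n) (xv_sq n i hi₁ hi₂)) _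
  rw [Finset.prod_congr rfl hpow, Finset.prod_mul_distrib, Finset.prod_pow_eq_pow_sum,
    sum_Icc_two_pow_pred_sub_one]

/-- For every `n ≥ 1`, in `R_n` one has
`∏_{i=1}^{n} (xᵢ + ε)^{2^{i−1}} = ε^{2^n − 1 − n} · ∏_{i=1}^{n} (xᵢ + ε)`. -/
theorem stmt11 (n : ℕ) (hn : 1 ≤ n) :
    ∏ i ∈ Finset.Icc 1 n, (xv n i + eps n) ^ (2 ^ (i - 1))
      = eps n ^ (2 ^ n - 1 - n) * ∏ i ∈ Finset.Icc 1 n, (xv n i + eps n) :=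
  stmt11_general n
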